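/- Every additive proper filter F on ℕ can be extended to an idempotent ultrafilter: there exists an ultrafilter U on ℕ with F ⊆ U and U ⊕ U = U. -/

import Mathlib

open Filter Set

/-- The rightward shift `A − n = {m ∈ ℕ+ | m + n ∈ A}`. -/
def shiftSet (A : Set ℕ+) (n : ℕ+) : Set ℕ+ := {m | m + n ∈ A}

/-- The pseudo-sum of two filters on `ℕ+`:
`A ∈ F ⊕ G ↔ {n | A − n ∈ G} ∈ F`. -/
def psum (F G : Filter ℕ+) : Filter ℕ+ where
  sets := {A | {n | shiftSet A n ∈ G} ∈ F}
  univ_sets := Filter.univ_mem' fun _ => Filter.univ_mem' fun _ => trivial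
  sets_of_superset := by
    intro A B hA hAB
    refine Filter.mem_of_superset hA fun n hn => ?_
    exact Filter.mem_of_superset hn fun m hm => hAB hm
  inter_sets := by
    intro A B hA hB
    refine Filter.mem_of_superset (Filter.inter_mem hA hB) ?_
    rintro n ⟨h1, h2⟩
    exact Filter.inter_mem h1 h2

/-- `A_V = {n | A − n ∈ V}`. -/
def subV (A : Set ℕ+) (V : Ultrafilter ℕ+) : Set ℕ+ :=
  {n | shiftSet A n ∈ (V : Filter ℕ+)}

/-- The family `F(V,G) = {B | B ⊇ F' ∩ A_V for some F' ∈ F, A ∈ G}`. -/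
def fvg (F : Filter ℕ+) (V : Ultrafilter ℕ+) (G : Filter ℕ+) : Filter ℕ+ where
  sets := {B | ∃ F' ∈ F, ∃ A ∈ G, F' ∩ subV A V ⊆ B}
  univ_sets := ⟨Set.univ, Filter.univ_mem, Set.univ, Filter.univ_mem, fun _ _ => trivial⟩
  sets_of_superset := by
    rintro A B ⟨F', hF', A', hA', hsub⟩ hAB
    exact ⟨F', hF', A', hA', hsub.trans hAB⟩
  inter_sets := by
    rintro A B ⟨F1, hF1, A1, hA1, h1⟩ ⟨F2, hF2, A2, hA2, h2⟩
    refine ⟨F1 ∩ F2, Filter.inter_mem hF1 hF2, A1 ∩ A2, Filter.inter_mem hA1 hA2, ?_⟩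
    rintro n ⟨⟨hn1, hn2⟩, hv⟩
    have hv1 : n ∈ subV A1 V := Filter.mem_of_superset hv fun m hm => hm.1
    have hv2 : n ∈ subV A2 V := Filter.mem_of_superset hv fun m hm => hm.2
    exact ⟨h1 ⟨hn1, hv1⟩, h2 ⟨hn2, hv2⟩⟩

/-- `FS(X)`: all finite sums of distinct elements of `X`. -/
def FS (X : Set ℕ+) : Set ℕ+ :=
  {n | ∃ F : Finset ℕ+, F.Nonempty ∧ ↑F ⊆ X ∧ ∑ x ∈ F, (x : ℕ) = (n : ℕ)}

/-- A filter `F` is additive if `F ⊆ F ⊕ V` for every ultrafilter `V ⊇ F`. -/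
def AdditiveFilter (F : Filter ℕ+) : Prop :=
  ∀ V : Ultrafilter ℕ+, (∀ A : Set ℕ+, A ∈ F → A ∈ (V : Filter ℕ+)) →
    ∀ A : Set ℕ+, A ∈ F → A ∈ psum F ↑V

/-- The pseudo-sum of two ultrafilters, as an ultrafilter. -/
def usum (U V : Ultrafilter ℕ+) : Ultrafilter ℕ+ :=
  Ultrafilter.ofComplNotMemIff (psum ↑U ↑V) (by
    intro s
    show ¬ {n | shiftSet sᶜ n ∈ (V : Filter ℕ+)} ∈ (U : Filter ℕ+) ↔
      {n | shiftSet s n ∈ (V : Filter ℕ+)} ∈ (U : Filter ℕ+)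
    have h : {n : ℕ+ | shiftSet sᶜ n ∈ (V : Filter ℕ+)}
        = {n : ℕ+ | shiftSet s n ∈ (V : Filter ℕ+)}ᶜ := by
      ext n
      show (shiftSet s n)ᶜ ∈ (V : Filter ℕ+) ↔ ¬ shiftSet s n ∈ (V : Filter ℕ+)
      exact Ultrafilter.compl_mem_iff_notMem
    rw [h]
    exact Ultrafilter.compl_notMem_iff)

/-- `Fil(C) = ⋂_{U ∈ C} U`. -/
def filOf (C : Set (Ultrafilter ℕ+)) : Filter ℕ+ where
  sets := {A | ∀ U ∈ C, A ∈ (U : Filter ℕ+)}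
  univ_sets := fun _ _ => Filter.univ_mem
  sets_of_superset := fun h hAB U hU => Filter.mem_of_superset (h U hU) hAB
  inter_sets := fun h1 h2 U hU => Filter.inter_mem (h1 U hU) (h2 U hU)

/-- `Cl(F) = {U ∈ βℕ | F ⊆ U}`. -/
def clOf (F : Filter ℕ+) : Set (Ultrafilter ℕ+) :=
  {U | ∀ A : Set ℕ+, A ∈ F → A ∈ (U : Filter ℕ+)}

lemma FS_mono {Y Z : Set ℕ+} (h : Y ⊆ Z) : FS Y ⊆ FS Z := by
  rintro n ⟨F, hne, hsub, hsum⟩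
  exact ⟨F, hne, hsub.trans h, hsum⟩

/-- The filter `FS_X = {A | A ⊇ FS(X \ F) for some finite F ⊆ X}`. -/
def fsFilter (X : Set ℕ+) : Filter ℕ+ where
  sets := {A | ∃ F : Finset ℕ+, ↑F ⊆ X ∧ FS (X \ ↑F) ⊆ A}
  univ_sets := ⟨∅, by simp, fun _ _ => trivial⟩
  sets_of_superset := by
    rintro A B ⟨F, hF, hFS⟩ hAB
    exact ⟨F, hF, hFS.trans hAB⟩
  inter_sets := by
    rintro A B ⟨F1, hF1, h1⟩ ⟨F2, hF2, h2⟩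
    refine ⟨F1 ∪ F2, ?_, fun n hn =>
      ⟨h1 (FS_mono (Set.diff_subset_diff_right ?_) hn),
       h2 (FS_mono (Set.diff_subset_diff_right ?_) hn)⟩⟩
    · intro x hx
      simp only [Finset.coe_union, Set.mem_union] at hx
      exact hx.elim (fun h => hF1 h) (fun h => hF2 h)
    · intro x hx
      simp only [Finset.coe_union, Set.mem_union]
      exact Or.inl hx
    · intro x hx
      simp only [Finset.coe_union, Set.mem_union]
      exact Or.inr hx

/-- `A` is finitely additively large (FAL): for every `n` there are
`x₁ < … < xₙ` with `FS({x₁,…,xₙ}) ⊆ A`. -/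
def FAL (A : Set ℕ+) : Prop :=
  ∀ n : ℕ, ∃ x : Fin n → ℕ+, StrictMono x ∧ FS (Set.range x) ⊆ A

/-- The family `{A | Aᶜ is not FAL}`. -/
def falFamily : Set (Set ℕ+) := {A | ¬ FAL Aᶜ}

attribute [local instance] Ultrafilter.addSemigroup

lemma psum_eq_add (U V : Ultrafilter ℕ+) : psum ↑U ↑V = ↑(U + V) := by
  ext A
  show {n | shiftSet A n ∈ (V : Filter ℕ+)} ∈ (U : Filter ℕ+) ↔
    ∀ᶠ m in ↑U, ∀ᶠ m' in ↑V, m + m' ∈ A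
  simp only [shiftSet, Filter.eventually_iff]
  constructor <;> intro h <;>
    · refine Filter.mem_of_superset h fun n hn => ?_
      exact Filter.mem_of_superset hn fun m hm => by simpa [add_comm] using hm

/-- Every additive proper filter extends to an idempotent
ultrafilter. -/
theorem statement12 (F : Filter ℕ+) (hF : F.NeBot) (hadd : AdditiveFilter F) :
    ∃ U : Ultrafilter ℕ+, (∀ A : Set ℕ+, A ∈ F → A ∈ (U : Filter ℕ+)) ∧
      psum ↑U ↑U = (U : Filter ℕ+) := by
  have hclosed : IsClosed (clOf F) := by
    have : clOf F = ⋂ A ∈ F.sets, {U : Ultrafilter ℕ+ | A ∈ U} := by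
      ext U; simp [clOf, Filter.mem_sets]
    rw [this]
    exact isClosed_biInter fun A _ => ultrafilter_isClosed_basic A
  have hne : (clOf F).Nonempty :=
    ⟨Ultrafilter.of F, fun A hA => Ultrafilter.of_le F hA⟩
  have hsemi : ∀ x ∈ clOf F, ∀ y ∈ clOf F, x + y ∈ clOf F := by
    intro x hx y hy A hA
    have h1 : A ∈ psum F ↑y := hadd y hy A hA
    have h2 : A ∈ psum ↑x ↑y := hx _ h1
    rwa [psum_eq_add] at h2
  obtain ⟨U, hU, hidem⟩ := exists_idempotent_in_compact_add_subsemigroup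
    (fun r => Ultrafilter.continuous_add_left r) (clOf F) hne hclosed.isCompact hsemi
  exact ⟨U, hU, by rw [psum_eq_add, hidem]⟩
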